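/- arXiv:1806.03668 — 5 statements merged into one kernel-verified Lean document; each statement's English description precedes it below -/
import Mathlib

section
/- Suppose T ~ N(μ, Σ) where Σ is a correlation matrix (symmetric positive definite with unit diagonal), μ has exactly one nonzero entry μ_j = A > 0. Let U be the inverse Cholesky factor (UΣU' = I) and D = diag(1/√((Σ^{-1})_{ii})). Then the j-th mean after the de-correlation transformation satisfies (Uμ)_j = A·U_{jj} ≥ A, and after the innovated transformation (DΣ^{-1}μ)_j = A·√((Σ^{-1})_{jj}) ≥ A·U_{jj}. Hence the innovated transformation yields the largest signal-to-noise ratio at position j. -/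
open MeasureTheory ProbabilityTheory Matrix Finset

noncomputable section

/-- Cramér–Wold characterization of a multivariate Gaussian vector. -/
def IsGaussianVector {Ω : Type*} [MeasureSpace Ω] {n : ℕ}
    (T : Ω → Fin n → ℝ) (μ : Fin n → ℝ) (S : Matrix (Fin n) (Fin n) ℝ) : Prop :=
  ∀ c : Fin n → ℝ,
    Measure.map (fun ω => ∑ i, c i * T ω i) (volume : Measure Ω)
      = gaussianReal (∑ i, c i * μ i) (∑ i, ∑ j, c i * S i j * c j).toNNReal

/-- For `T ~ N(μ, S)` with correlation matrix `S` and a single signal `μ j = A > 0`: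
the de-correlation transformation gives mean `(U μ) j = A * U j j ≥ A`, and the
innovated transformation gives mean `(D S⁻¹ μ) j = A * √((S⁻¹) j j) ≥ A * U j j`. -/
theorem stmt_3 {Ω : Type*} [MeasureSpace Ω] {n : ℕ}
    (T : Ω → Fin n → ℝ) (μ : Fin n → ℝ) (S U : Matrix (Fin n) (Fin n) ℝ)
    (hsymm : S.IsSymm) (hpd : S.PosDef) (hdiag : ∀ i, S i i = 1)
    (hT : IsGaussianVector T μ S)
    (j : Fin n) (A : ℝ) (hA : 0 < A) (hμj : μ j = A) (hμ : ∀ i, i ≠ j → μ i = 0)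
    (hlow : ∀ i k : Fin n, i < k → U i k = 0) (hUpos : ∀ i, 0 < U i i)
    (hfact : U * S * Uᵀ = 1)
    (D : Matrix (Fin n) (Fin n) ℝ)
    (hD : D = Matrix.diagonal fun i => 1 / Real.sqrt (S⁻¹ i i)) :
    (U *ᵥ μ) j = A * U j j ∧ A ≤ A * U j j ∧
    ((D * S⁻¹) *ᵥ μ) j = A * Real.sqrt (S⁻¹ j j) ∧
    A * U j j ≤ A * Real.sqrt (S⁻¹ j j) := by
  classical
  set L : Matrix (Fin n) (Fin n) ℝ := S * Uᵀ with hL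
  have hUL : U * L = 1 := by rw [hL, ← Matrix.mul_assoc]; exact hfact
  have hLU : L * U = 1 := mul_eq_one_comm.mp hUL
  have hUinv : U⁻¹ = L := Matrix.inv_eq_right_inv hUL
  have hSmul : S * (Uᵀ * U) = 1 := by rw [← Matrix.mul_assoc]; exact hLU
  have hSinv : S⁻¹ = Uᵀ * U := Matrix.inv_eq_right_inv hSmul
  have hsjj : S⁻¹ j j = ∑ k, U k j ^ 2 := by
    rw [hSinv, Matrix.mul_apply]
    simp [Matrix.transpose_apply, sq]
  have hInvU : Invertible U := invertibleOfRightInverse _ _ hUL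
  have hBT : (Uᵀ).BlockTriangular id := fun i k h => by
    simpa [Matrix.transpose_apply] using hlow k i h
  have hBTinv : ((Uᵀ)⁻¹).BlockTriangular id := by
    have : Invertible Uᵀ := Matrix.invertibleTranspose U
    exact Matrix.blockTriangular_inv_of_blockTriangular hBT
  have hLlow : ∀ i k : Fin n, i < k → L i k = 0 := by
    intro i k h
    have := hBTinv (i := k) (j := i) h
    rwa [← Matrix.transpose_nonsing_inv, hUinv, Matrix.transpose_apply] at this
  have hLjj : L j j * U j j = 1 := by
    have h1 : (L * U) j j = 1 := by rw [hLU]; simp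
    rw [Matrix.mul_apply] at h1
    rwa [Finset.sum_eq_single j (fun k _ hk => by
      rcases lt_or_gt_of_ne hk with h | h
      · rw [hlow k j h, mul_zero]
      · rw [hLlow j k h, zero_mul]) (fun h => absurd (Finset.mem_univ j) h)] at h1
  have hSLL : S = L * Lᵀ := by
    have h2 : L * Lᵀ = S * (Uᵀ * U) * S := by
      rw [hL, Matrix.transpose_mul, Matrix.transpose_transpose, hsymm.eq]
      noncomm_ring
    rw [h2, hSmul, Matrix.one_mul]
  have hLjj_sq : L j j ^ 2 ≤ 1 := by
    have h1 : (1:ℝ) = ∑ k, L j k ^ 2 := by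
      have h3 := congrArg (fun M => M j j) hSLL
      simpa [Matrix.mul_apply, hdiag j, sq] using h3
    rw [h1]
    exact Finset.single_le_sum (f := fun k => L j k ^ 2) (fun k _ => sq_nonneg _) (Finset.mem_univ j)
  have hU1 : (1:ℝ) ≤ U j j := by
    nlinarith [hUpos j, sq_nonneg (U j j - 1)]
  have hsq : U j j ^ 2 ≤ S⁻¹ j j := by
    rw [hsjj]
    exact Finset.single_le_sum (f := fun k => U k j ^ 2) (fun k _ => sq_nonneg _) (Finset.mem_univ j)
  have hspos : 0 < S⁻¹ j j := lt_of_lt_of_le (by positivity) hsq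
  have hUsqrt : U j j ≤ Real.sqrt (S⁻¹ j j) :=
    (Real.le_sqrt (hUpos j).le hspos.le).mpr hsq
  have hpart1 : (U *ᵥ μ) j = A * U j j := by
    rw [Matrix.mulVec, dotProduct]
    rw [Finset.sum_eq_single j (fun k _ hk => by rw [hμ k hk, mul_zero])
      (fun h => absurd (Finset.mem_univ j) h), hμj, mul_comm]
  have hpart3 : ((D * S⁻¹) *ᵥ μ) j = A * Real.sqrt (S⁻¹ j j) := by
    rw [← Matrix.mulVec_mulVec, hD]
    have hv : (S⁻¹ *ᵥ μ) j = S⁻¹ j j * A := by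
      rw [Matrix.mulVec, dotProduct]
      rw [Finset.sum_eq_single j (fun k _ hk => by rw [hμ k hk, mul_zero])
        (fun h => absurd (Finset.mem_univ j) h), hμj]
    rw [Matrix.mulVec_diagonal, hv]
    have hss : Real.sqrt (S⁻¹ j j) * Real.sqrt (S⁻¹ j j) = S⁻¹ j j :=
      Real.mul_self_sqrt hspos.le
    rw [one_div, inv_mul_eq_div, mul_comm (S⁻¹ j j) A, mul_div_assoc, Real.div_sqrt]
  exact ⟨hpart1, le_mul_of_one_le_right hA.le hU1, hpart3,
    mul_le_mul_of_nonneg_left hUsqrt hA.le⟩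
end
end

section
/- In the linear model Y = Xβ + Zγ + ε with ε ~ N(0, σ²I), let T_J = Λ β̂_J/σ be the standardized joint-fitting statistics with Λ = diag(1/√λ_j), λ_j = ((X'(I−H)X)^{-1})_{jj}, and let T_M = C X'(I−H)Y/σ be the standardized marginal statistics with C = diag(1/√(X_j'(I−H)X_j)). Then T_M equals the innovated transformation of T_J: T_M = D Σ_{T_J}^{-1} T_J, where Σ_{T_J} = Λ(X'(I−H)X)^{-1}Λ and D = diag(1/√((Σ_{T_J}^{-1})_{jj})). -/
/-! Write `M = (Xᵀ(1-H)X)⁻¹` and `Λ = diag(M)^{-1/2}`, so that `Σ_{T_J} = Λ M Λ`. Then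
`Σ⁻¹ Λ M = Λ⁻¹`, and the innovated statistic is `D Λ⁻¹ Xᵀ(1-H)y/σ`. Since
`(Σ⁻¹)_jj = M_jj (M⁻¹)_jj`, the diagonal matrix `D Λ⁻¹` is `diag(M⁻¹)^{-1/2} = C`. -/

open Matrix

noncomputable section

namespace Matrix

variable {ι : Type*} [Fintype ι] [DecidableEq ι]

def invSqrtDiag (M : Matrix ι ι ℝ) : Matrix ι ι ℝ :=
  diagonal fun j => 1 / √(M j j)

lemma invSqrtDiag_mul_diagonal_sqrt {M : Matrix ι ι ℝ} (hM : ∀ j, 0 < M j j) :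
    invSqrtDiag M * diagonal (fun j => √(M j j)) = 1 := by
  rw [invSqrtDiag, diagonal_mul_diagonal, ← diagonal_one]
  congr 1
  funext j
  exact one_div_mul_cancel (Real.sqrt_pos.2 (hM j)).ne'

lemma inv_invSqrtDiag {M : Matrix ι ι ℝ} (hM : ∀ j, 0 < M j j) :
    (invSqrtDiag M)⁻¹ = diagonal fun j => √(M j j) :=
  inv_eq_right_inv (invSqrtDiag_mul_diagonal_sqrt hM)

lemma isUnit_det_invSqrtDiag {M : Matrix ι ι ℝ} (hM : ∀ j, 0 < M j j) :
    IsUnit (invSqrtDiag M).det :=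
  isUnit_det_of_right_inverse (invSqrtDiag_mul_diagonal_sqrt hM)

def corr (M : Matrix ι ι ℝ) : Matrix ι ι ℝ :=
  invSqrtDiag M * M * invSqrtDiag M

variable {M : Matrix ι ι ℝ}

lemma inv_corr :
    (corr M)⁻¹ = (invSqrtDiag M)⁻¹ * M⁻¹ * (invSqrtDiag M)⁻¹ := by
  rw [corr, mul_inv_rev, mul_inv_rev, Matrix.mul_assoc]

lemma inv_corr_apply_self (hpos : ∀ j, 0 < M j j) (j : ι) :
    (corr M)⁻¹ j j = M j j * M⁻¹ j j := by
  rw [inv_corr, inv_invSqrtDiag hpos, mul_diagonal, diagonal_mul, mul_right_comm,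
    Real.mul_self_sqrt (hpos j).le]

lemma invSqrtDiag_inv_corr_mul_inv_invSqrtDiag (hpos : ∀ j, 0 < M j j) :
    invSqrtDiag (corr M)⁻¹ * (invSqrtDiag M)⁻¹ = invSqrtDiag M⁻¹ := by
  rw [inv_invSqrtDiag hpos, invSqrtDiag, diagonal_mul_diagonal, invSqrtDiag]
  congr 1
  funext j
  rw [inv_corr_apply_self hpos, Real.sqrt_mul (hpos j).le, one_div_mul_eq_div,
    div_mul_cancel_left₀ (Real.sqrt_pos.2 (hpos j)).ne', one_div]

theorem invSqrtDiag_inv_corr_mul_inv_corr_mul (hM : IsUnit M.det) (hpos : ∀ j, 0 < M j j) :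
    invSqrtDiag (corr M)⁻¹ * (corr M)⁻¹ * (invSqrtDiag M * M) = invSqrtDiag M⁻¹ := by
  have hΛ : (invSqrtDiag M)⁻¹ * invSqrtDiag M = 1 :=
    nonsing_inv_mul _ (isUnit_det_invSqrtDiag hpos)
  calc invSqrtDiag (corr M)⁻¹ * (corr M)⁻¹ * (invSqrtDiag M * M)
      = invSqrtDiag (corr M)⁻¹ * (invSqrtDiag M)⁻¹ *
          (M⁻¹ * ((invSqrtDiag M)⁻¹ * invSqrtDiag M) * M) := by
        simp only [inv_corr, Matrix.mul_assoc]
    _ = invSqrtDiag M⁻¹ := by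
        rw [hΛ, Matrix.mul_one, nonsing_inv_mul M hM, Matrix.mul_one,
          invSqrtDiag_inv_corr_mul_inv_invSqrtDiag hpos]

end Matrix

theorem stmt_9_general {N n : ℕ}
    (X : Matrix (Fin N) (Fin n) ℝ)
    (σ : ℝ)
    (H : Matrix (Fin N) (Fin N) ℝ)
    (hpd : (Xᵀ * (1 - H) * X).PosDef)
    (Λ : Matrix (Fin n) (Fin n) ℝ)
    (hΛ : Λ = Matrix.diagonal fun j => 1 / Real.sqrt ((((Xᵀ * (1 - H) * X)⁻¹ : Matrix (Fin n) (Fin n) ℝ) j j)))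
    (C : Matrix (Fin n) (Fin n) ℝ)
    (hC : C = Matrix.diagonal fun j => 1 / Real.sqrt (((Xᵀ * (1 - H) * X : Matrix (Fin n) (Fin n) ℝ) j j)))
    (TJ TM : (Fin N → ℝ) → Fin n → ℝ)
    (hTJ : ∀ y, TJ y = σ⁻¹ • ((Λ * (Xᵀ * (1 - H) * X)⁻¹ * Xᵀ * (1 - H)) *ᵥ y))
    (hTM : ∀ y, TM y = σ⁻¹ • ((C * Xᵀ * (1 - H)) *ᵥ y))
    (STJ : Matrix (Fin n) (Fin n) ℝ) (hSTJ : STJ = Λ * (Xᵀ * (1 - H) * X)⁻¹ * Λ)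
    (D : Matrix (Fin n) (Fin n) ℝ)
    (hD : D = Matrix.diagonal fun j => 1 / Real.sqrt ((STJ⁻¹) j j)) :
    ∀ y, TM y = (D * STJ⁻¹) *ᵥ TJ y := by
  intro y
  have hcoeff : D * STJ⁻¹ * (Λ * (Xᵀ * (1 - H) * X)⁻¹ * Xᵀ * (1 - H)) = C * Xᵀ * (1 - H) := by
    have h := invSqrtDiag_inv_corr_mul_inv_corr_mul ((isUnit_iff_isUnit_det _).1 hpd.inv.isUnit)
      fun _ => hpd.inv.diag_pos
    rw [nonsing_inv_nonsing_inv _ ((isUnit_iff_isUnit_det _).1 hpd.isUnit)] at h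
    rw [← Matrix.mul_assoc, ← Matrix.mul_assoc, hD, hSTJ, hΛ, hC]
    exact congrArg (· * Xᵀ * (1 - H)) h
  rw [hTM, hTJ, mulVec_smul, mulVec_mulVec, hcoeff]

/-- In the linear model, the standardized marginal statistics are the innovated
transformation of the standardized joint statistics: with
`T_J(y) = Λ(Xᵀ(I−H)X)⁻¹Xᵀ(I−H) y / σ`, `T_M(y) = C Xᵀ(I−H) y / σ`,
`Σ_{T_J} = Λ(Xᵀ(I−H)X)⁻¹Λ` and `D = diag(1/√((Σ_{T_J}⁻¹)_{jj}))`, one has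
`T_M(y) = D Σ_{T_J}⁻¹ T_J(y)` for every data vector `y`. -/
theorem stmt_9 {N n m : ℕ}
    (X : Matrix (Fin N) (Fin n) ℝ) (Z : Matrix (Fin N) (Fin m) ℝ)
    (σ : ℝ) (hσ : 0 < σ)
    (hZ : IsUnit (Zᵀ * Z).det)
    (H : Matrix (Fin N) (Fin N) ℝ) (hH : H = Z * (Zᵀ * Z)⁻¹ * Zᵀ)
    (hpd : (Xᵀ * (1 - H) * X).PosDef)
    (Λ : Matrix (Fin n) (Fin n) ℝ)
    (hΛ : Λ = Matrix.diagonal fun j => 1 / Real.sqrt ((((Xᵀ * (1 - H) * X)⁻¹ : Matrix (Fin n) (Fin n) ℝ) j j)))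
    (C : Matrix (Fin n) (Fin n) ℝ)
    (hC : C = Matrix.diagonal fun j => 1 / Real.sqrt (((Xᵀ * (1 - H) * X : Matrix (Fin n) (Fin n) ℝ) j j)))
    (TJ TM : (Fin N → ℝ) → Fin n → ℝ)
    (hTJ : ∀ y, TJ y = σ⁻¹ • ((Λ * (Xᵀ * (1 - H) * X)⁻¹ * Xᵀ * (1 - H)) *ᵥ y))
    (hTM : ∀ y, TM y = σ⁻¹ • ((C * Xᵀ * (1 - H)) *ᵥ y))
    (STJ : Matrix (Fin n) (Fin n) ℝ) (hSTJ : STJ = Λ * (Xᵀ * (1 - H) * X)⁻¹ * Λ)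
    (D : Matrix (Fin n) (Fin n) ℝ)
    (hD : D = Matrix.diagonal fun j => 1 / Real.sqrt ((STJ⁻¹) j j)) :
    ∀ y, TM y = (D * STJ⁻¹) *ᵥ TJ y :=
  stmt_9_general X σ H hpd Λ hΛ C hC TJ TM hTJ hTM STJ hSTJ D hD
end
end

section
/- In the linear model Y = Xβ + Zγ + ε with a single nonzero coefficient β_j/σ = A > 0 (all other coefficients zero), the means of the standardized statistics satisfy E(T_{J,j}) ≤ E(T_{J,j}^{DT}) ≤ E(T_{M,j}), i.e., joint fitting gives the smallest signal-to-noise ratio, de-correlation intermediate, and marginal fitting (the innovated transformation) the largest. -/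
/-
Since `β` is a multiple of `e_j`, each mean is `A` times a diagonal entry, so it suffices to
show `1 ≤ (U_J)_jj ≤ √(M⁻¹_jj M_jj)` with `M = Xᵀ(1 - H)X`. Let `Σ = Σ_{T_J}`, the
correlation matrix of `M⁻¹`. From `U_J Σ U_Jᵀ = 1` we get `Σ = U_J⁻¹ U_J⁻ᵀ` and
`Σ⁻¹ = U_Jᵀ U_J`. As `U_J` is lower triangular, `(U_J⁻¹)_jj = (U_J)_jj⁻¹`, so the unit diagonal
of `Σ` gives `1 = Σ_jj ≥ (U_J)_jj⁻²`; conversely `(U_J)_jj² ≤ (U_Jᵀ U_J)_jj = (Σ⁻¹)_jj`,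
and `(Σ⁻¹)_jj = M⁻¹_jj M_jj`.
-/

open Matrix

noncomputable section

theorem Real.mul_inv_sqrt_le_sqrt_of_sq_le_mul {u a b : ℝ} (ha : 0 < a) (h : u ^ 2 ≤ a * b) :
    u * (√a)⁻¹ ≤ √b := by
  rw [← div_eq_mul_inv, div_le_iff₀ (Real.sqrt_pos.2 ha), ← Real.sqrt_mul' b ha.le]
  exact Real.le_sqrt_of_sq_le (by rwa [mul_comm])

namespace Matrix

section Triangular

variable {ι R : Type*} [Fintype ι] [LinearOrder ι]

theorem IsLowerTriangular.mul_apply_self [NonUnitalNonAssocSemiring R] {A B : Matrix ι ι R}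
    (hA : A.IsLowerTriangular) (hB : B.IsLowerTriangular) (i : ι) :
    (A * B) i i = A i i * B i i := by
  rw [mul_apply]
  refine Finset.sum_eq_single i (fun k _ hki => ?_) (by simp)
  rcases hki.lt_or_gt with hki | hki
  · rw [hB (show OrderDual.toDual i < OrderDual.toDual k from hki), mul_zero]
  · rw [hA (show OrderDual.toDual k < OrderDual.toDual i from hki), zero_mul]

theorem IsLowerTriangular.inv_apply_self_mul [CommRing R] {L : Matrix ι ι R}
    (hL : L.IsLowerTriangular) (hdet : IsUnit L.det) (i : ι) : L⁻¹ i i * L i i = 1 := by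
  have : Invertible L := L.invertibleOfIsUnitDet hdet
  rw [← IsLowerTriangular.mul_apply_self (blockTriangular_inv_of_blockTriangular hL) hL,
    nonsing_inv_mul L hdet, one_apply_eq]

end Triangular

section Congruence

variable {ι R : Type*} [Fintype ι] [DecidableEq ι] [CommRing R] {L S : Matrix ι ι R}

theorem isUnit_det_of_mul_mul_transpose_eq_one (h : L * S * Lᵀ = 1) : IsUnit L.det :=
  IsUnit.of_mul_eq_one (S * Lᵀ).det <| by rw [← det_mul, ← Matrix.mul_assoc, h, det_one]

theorem eq_inv_mul_inv_transpose_of_mul_mul_transpose_eq_one (h : L * S * Lᵀ = 1) :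
    S = L⁻¹ * L⁻¹ᵀ := by
  have hL := isUnit_det_of_mul_mul_transpose_eq_one h
  have hLt : IsUnit Lᵀ.det := by rwa [det_transpose]
  rw [transpose_nonsing_inv, ← Matrix.mul_one L⁻¹, ← h]
  simp only [Matrix.mul_assoc, mul_nonsing_inv Lᵀ hLt, Matrix.mul_one]
  rw [← Matrix.mul_assoc, nonsing_inv_mul L hL, Matrix.one_mul]

theorem inv_eq_transpose_mul_of_mul_mul_transpose_eq_one (h : L * S * Lᵀ = 1) :
    S⁻¹ = Lᵀ * L := by
  have hL := isUnit_det_of_mul_mul_transpose_eq_one h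
  refine inv_eq_left_inv ?_
  rw [eq_inv_mul_inv_transpose_of_mul_mul_transpose_eq_one h, Matrix.mul_assoc,
    ← Matrix.mul_assoc L, mul_nonsing_inv L hL, Matrix.one_mul, ← transpose_mul,
    nonsing_inv_mul L hL, transpose_one]

end Congruence

section Cholesky

variable {ι R : Type*} [Fintype ι] [CommRing R] [LinearOrder R] [IsStrictOrderedRing R]

theorem sq_apply_self_le_mul_transpose_apply_self (A : Matrix ι ι R) (i : ι) :
    A i i ^ 2 ≤ (A * Aᵀ) i i := by
  simp only [mul_apply, transpose_apply, ← sq]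
  exact Finset.single_le_sum (fun k _ => sq_nonneg (A i k)) (Finset.mem_univ i)

theorem sq_apply_self_le_inv_apply_self_of_mul_mul_transpose_eq_one [DecidableEq ι]
    {L S : Matrix ι ι R} (h : L * S * Lᵀ = 1) (j : ι) : L j j ^ 2 ≤ S⁻¹ j j := by
  simpa [inv_eq_transpose_mul_of_mul_mul_transpose_eq_one h] using
    sq_apply_self_le_mul_transpose_apply_self Lᵀ j

theorem one_le_apply_self_of_mul_mul_transpose_eq_one [LinearOrder ι] {L S : Matrix ι ι R}
    (hL : L.IsLowerTriangular) {j : ι} (hLj : 0 < L j j) (hSj : S j j = 1)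
    (h : L * S * Lᵀ = 1) : 1 ≤ L j j := by
  have hinv : L⁻¹ j j * L j j = 1 :=
    hL.inv_apply_self_mul (isUnit_det_of_mul_mul_transpose_eq_one h) j
  have hsq : L⁻¹ j j ^ 2 ≤ 1 := by
    simpa [hSj, ← eq_inv_mul_inv_transpose_of_mul_mul_transpose_eq_one h] using
      sq_apply_self_le_mul_transpose_apply_self L⁻¹ j
  have hLj_sq : 1 ≤ L j j ^ 2 := calc
    1 = (L⁻¹ j j * L j j) ^ 2 := by rw [hinv, one_pow]
    _ = L⁻¹ j j ^ 2 * L j j ^ 2 := mul_pow _ _ _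
    _ ≤ L j j ^ 2 := mul_le_of_le_one_left (sq_nonneg _) hsq
  exact (one_le_sq_iff₀ hLj.le).1 hLj_sq

end Cholesky

theorem inv_diagonal_mul_mul_diagonal {ι K : Type*} [Fintype ι] [DecidableEq ι] [Field K]
    {d : ι → K} (hd : ∀ i, d i ≠ 0) (A : Matrix ι ι K) :
    (diagonal d * A * diagonal d)⁻¹ = diagonal d⁻¹ * A⁻¹ * diagonal d⁻¹ := by
  have hD : (diagonal d)⁻¹ = diagonal d⁻¹ :=
    inv_eq_left_inv <| by simp [diagonal_mul_diagonal, hd]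
  rw [mul_inv_rev, mul_inv_rev, hD, Matrix.mul_assoc]

section Correlation

variable {ι : Type*} [Fintype ι] [DecidableEq ι] {P : Matrix ι ι ℝ}

def correlation (P : Matrix ι ι ℝ) : Matrix ι ι ℝ :=
  diagonal (fun i => 1 / √(P i i)) * P * diagonal (fun i => 1 / √(P i i))

theorem correlation_apply_self {i : ι} (hi : 0 < P i i) : correlation P i i = 1 := by
  simp only [correlation, mul_diagonal, diagonal_mul]
  field_simp
  exact (Real.sq_sqrt hi.le).symm

theorem inv_correlation_apply_self (hP : ∀ i, 0 < P i i) (i : ι) :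
    (correlation P)⁻¹ i i = P i i * P⁻¹ i i := by
  rw [correlation, inv_diagonal_mul_mul_diagonal fun k => by simpa using (Real.sqrt_pos.2 (hP k)).ne']
  simp only [mul_diagonal, diagonal_mul, Pi.inv_apply, one_div, inv_inv]
  rw [mul_right_comm, Real.mul_self_sqrt (hP i).le]

theorem correlation_mul_inv_diagonal_apply_self (hP : ∀ i, 0 < P i i) (i : ι) :
    (correlation P * (diagonal fun i => 1 / √(P i i))⁻¹) i i = √(P i i) := by
  have hD : IsUnit (diagonal fun i => 1 / √(P i i)).det := by
    simpa [det_diagonal, Finset.prod_ne_zero_iff] using fun k => (Real.sqrt_pos.2 (hP k)).ne'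
  rw [correlation, Matrix.mul_assoc _ (diagonal _), mul_nonsing_inv _ hD, Matrix.mul_one]
  simp [← div_eq_inv_mul]

end Correlation

end Matrix

theorem stmt_11_general {N n : ℕ}
    (X : Matrix (Fin N) (Fin n) ℝ)
    (β : Fin n → ℝ) (σ : ℝ) (hσ : 0 < σ)
    (H : Matrix (Fin N) (Fin N) ℝ)
    (hpd : (Xᵀ * (1 - H) * X).PosDef)
    (Λ : Matrix (Fin n) (Fin n) ℝ)
    (hΛ : Λ = Matrix.diagonal fun i => 1 / Real.sqrt ((((Xᵀ * (1 - H) * X)⁻¹ : Matrix (Fin n) (Fin n) ℝ) i i)))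
    (C : Matrix (Fin n) (Fin n) ℝ)
    (hC : C = Matrix.diagonal fun i => 1 / Real.sqrt (((Xᵀ * (1 - H) * X : Matrix (Fin n) (Fin n) ℝ) i i)))
    (STJ STM : Matrix (Fin n) (Fin n) ℝ)
    (hSTJ : STJ = Λ * (Xᵀ * (1 - H) * X)⁻¹ * Λ)
    (hSTM : STM = C * (Xᵀ * (1 - H) * X) * C)
    (UJ : Matrix (Fin n) (Fin n) ℝ)
    (hUJlow : ∀ i k : Fin n, i < k → UJ i k = 0) (hUJpos : ∀ i, 0 < UJ i i)
    (hUJ : UJ * STJ * UJᵀ = 1)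
    (j : Fin n) (A : ℝ) (hA : 0 < A) (hβj : β j = σ * A)
    (hβ : ∀ i, i ≠ j → β i = 0) :
    σ⁻¹ * (Λ *ᵥ β) j ≤ σ⁻¹ * ((UJ * Λ) *ᵥ β) j ∧
    σ⁻¹ * ((UJ * Λ) *ᵥ β) j ≤ σ⁻¹ * ((STM * C⁻¹) *ᵥ β) j := by
  set M := Xᵀ * (1 - H) * X
  have hM : ∀ i, 0 < M i i := fun i => hpd.diag_pos
  have hMinv : ∀ i, 0 < M⁻¹ i i := fun i => hpd.inv.diag_pos
  have hSTJ_corr : STJ = correlation M⁻¹ := by rw [hSTJ, hΛ]; rfl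
  have hUJ_ge : 1 ≤ UJ j j :=
    one_le_apply_self_of_mul_mul_transpose_eq_one (fun i k hik => hUJlow i k hik) (hUJpos j)
      (hSTJ_corr ▸ correlation_apply_self (hMinv j)) hUJ
  have hUJ_le : UJ j j ^ 2 ≤ M⁻¹ j j * M j j := by
    simpa [hSTJ_corr, inv_correlation_apply_self hMinv,
      nonsing_inv_nonsing_inv M hpd.det_pos.ne'.isUnit] using
      sq_apply_self_le_inv_apply_self_of_mul_mul_transpose_eq_one hUJ j
  have hSTM_C : (STM * C⁻¹) j j = √(M j j) := by
    rw [hSTM, hC]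
    exact correlation_mul_inv_diagonal_apply_self hM j
  have hβ_single : β = Pi.single j (σ * A) := by
    ext i
    rcases eq_or_ne i j with rfl | hij
    · simp [hβj]
    · simp [hβ i hij, hij]
  have hsnr : ∀ Q : Matrix (Fin n) (Fin n) ℝ, σ⁻¹ * (Q *ᵥ β) j = Q j j * A := fun Q => by
    simp only [hβ_single, mulVec_single, Pi.smul_apply, op_smul_eq_mul, col_apply]
    field_simp
  have hΛjj : Λ j j = (√(M⁻¹ j j))⁻¹ := by simp [hΛ]
  have hUJΛ : (UJ * Λ) j j = UJ j j * Λ j j := by simp [hΛ]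
  rw [hsnr, hsnr, hsnr, hUJΛ, hSTM_C]
  constructor <;> gcongr ?_ * A
  · exact le_mul_of_one_le_left (by rw [hΛjj]; positivity) hUJ_ge
  · exact hΛjj ▸ Real.mul_inv_sqrt_le_sqrt_of_sq_le_mul (hMinv j) hUJ_le

/-- In the linear model with a single nonzero coefficient `β j / σ = A > 0`, the means of
the standardized statistics satisfy `E(T_{J,j}) ≤ E(T_{J,j}^{DT}) ≤ E(T_{M,j})`: joint
fitting gives the smallest SNR, de-correlation intermediate, and marginal fitting (the
innovated transformation) the largest. -/
theorem stmt_11 {N n m : ℕ}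
    (X : Matrix (Fin N) (Fin n) ℝ) (Z : Matrix (Fin N) (Fin m) ℝ)
    (β : Fin n → ℝ) (σ : ℝ) (hσ : 0 < σ)
    (hZ : IsUnit (Zᵀ * Z).det)
    (H : Matrix (Fin N) (Fin N) ℝ) (hH : H = Z * (Zᵀ * Z)⁻¹ * Zᵀ)
    (hpd : (Xᵀ * (1 - H) * X).PosDef)
    (Λ : Matrix (Fin n) (Fin n) ℝ)
    (hΛ : Λ = Matrix.diagonal fun i => 1 / Real.sqrt ((((Xᵀ * (1 - H) * X)⁻¹ : Matrix (Fin n) (Fin n) ℝ) i i)))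
    (C : Matrix (Fin n) (Fin n) ℝ)
    (hC : C = Matrix.diagonal fun i => 1 / Real.sqrt (((Xᵀ * (1 - H) * X : Matrix (Fin n) (Fin n) ℝ) i i)))
    (STJ STM : Matrix (Fin n) (Fin n) ℝ)
    (hSTJ : STJ = Λ * (Xᵀ * (1 - H) * X)⁻¹ * Λ)
    (hSTM : STM = C * (Xᵀ * (1 - H) * X) * C)
    (UJ : Matrix (Fin n) (Fin n) ℝ)
    (hUJlow : ∀ i k : Fin n, i < k → UJ i k = 0) (hUJpos : ∀ i, 0 < UJ i i)
    (hUJ : UJ * STJ * UJᵀ = 1)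
    (j : Fin n) (A : ℝ) (hA : 0 < A) (hβj : β j = σ * A)
    (hβ : ∀ i, i ≠ j → β i = 0) :
    σ⁻¹ * (Λ *ᵥ β) j ≤ σ⁻¹ * ((UJ * Λ) *ᵥ β) j ∧
    σ⁻¹ * ((UJ * Λ) *ᵥ β) j ≤ σ⁻¹ * ((STM * C⁻¹) *ᵥ β) j :=
  stmt_11_general X β σ hσ H hpd Λ hΛ C hC STJ STM hSTJ hSTM UJ hUJlow hUJpos hUJ j A hA hβj hβ
end
end

section
/- In the bivariate setting with 0 < |a| ≤ b and a = b (equal signals), the three SNRs satisfy: E(T_{MS}) = b√2·√(1+ρ) is strictly the largest among {E(T_{J2}) = b√(1−ρ)√(1+ρ), E(T_{M2}) = b(1+ρ), E(T_{MS})} for all ρ ∈ (−1, 1) with b > 0; moreover if ρ > 0 then E(T_{J2}) is the smallest, and if ρ < 0 then E(T_{M2}) is the smallest. -/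
/-! All three SNRs carry the common factor `b √(1+ρ)`: writing `b (1+ρ) = b √(1+ρ) √(1+ρ)`, they
are `b √r √(1+ρ)` with `r = 1-ρ`, `1+ρ`, `2` respectively, so every comparison reduces to comparing
these radicands on `(-1, 1)`. -/

open Real

lemma mul_sqrt_mul_sqrt_lt {b x y z : ℝ} (hb : 0 < b) (hz : 0 < z) (hx : 0 ≤ x) (hxy : x < y) :
    b * √x * √z < b * √y * √z :=
  mul_lt_mul_of_pos_right (mul_lt_mul_of_pos_left (sqrt_lt_sqrt hx hxy) hb) (sqrt_pos.mpr hz)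

lemma mul_eq_mul_sqrt_mul_sqrt (b : ℝ) {z : ℝ} (hz : 0 ≤ z) : b * z = b * √z * √z := by
  rw [mul_assoc, mul_self_sqrt hz]

/-- In the bivariate setting with equal signals `a = b > 0` and `ρ ∈ (−1,1)`:
`E(T_{MS}) = b√2·√(1+ρ)` is strictly larger than both `E(T_{J2}) = b√(1−ρ)√(1+ρ)` and
`E(T_{M2}) = b(1+ρ)`; moreover if `ρ > 0` then `E(T_{J2})` is the smallest and if
`ρ < 0` then `E(T_{M2})` is the smallest. -/
theorem stmt_13 (b ρ : ℝ) (hb : 0 < b) (hρ : ρ ∈ Set.Ioo (-1 : ℝ) 1) :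
    (b * Real.sqrt (1 - ρ) * Real.sqrt (1 + ρ) < b * Real.sqrt 2 * Real.sqrt (1 + ρ) ∧
      b * (1 + ρ) < b * Real.sqrt 2 * Real.sqrt (1 + ρ)) ∧
    (0 < ρ → b * Real.sqrt (1 - ρ) * Real.sqrt (1 + ρ) < b * (1 + ρ)) ∧
    (ρ < 0 → b * (1 + ρ) < b * Real.sqrt (1 - ρ) * Real.sqrt (1 + ρ)) := by
  obtain ⟨hρ_gt, hρ_lt⟩ := hρ
  have hplus : 0 < 1 + ρ := by linarith
  have hminus : 0 < 1 - ρ := by linarith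
  rw [mul_eq_mul_sqrt_mul_sqrt b hplus.le]
  refine ⟨⟨?_, ?_⟩, fun hpos => ?_, fun hneg => ?_⟩
  · exact mul_sqrt_mul_sqrt_lt hb hplus hminus.le (by linarith)
  · exact mul_sqrt_mul_sqrt_lt hb hplus hplus.le (by linarith)
  · exact mul_sqrt_mul_sqrt_lt hb hplus hminus.le (by linarith)
  · exact mul_sqrt_mul_sqrt_lt hb hplus hplus.le (by linarith)
end

section
/- Let S_1, …, S_m be statistics with continuous null survival functions G_1, …, G_m, and define the omnibus statistic S_o = min_j G_j(S_j). If each event {S_j < G_j^{-1}(s)} can be written as a cross-boundary event {P_{(i)} > u_{ji}(s) for all i}, then the survival function of S_o satisfies P(S_o > s) = P(P_{(i)} > u_i*(s) for all i = 1,…,n), where u_i*(s) = max_j u_{ji}(s). -/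
/-!
Since `G j` is strictly decreasing and `G j (Ginv j s) = s`, the event `{s < G j (S j)}` is
`{S j < Ginv j s}`, a cross-boundary event. Hence `{s < S_o}` is the intersection over `j` of
these events, and `P i` clears every boundary `u j i s` exactly when it clears their maximum.
-/

open MeasureTheory Finset

theorem StrictAnti.lt_apply_iff_of_apply_eq {α β : Type*} [LinearOrder α] [Preorder β]
    {f : α → β} (hf : StrictAnti f) {a : α} {b : β} (ha : f a = b) (x : α) :
    b < f x ↔ x < a := by
  rw [← ha]
  exact hf.lt_iff_gt

theorem setOf_lt_inf'_eq_iInter {ι Ω β : Type*} [Fintype ι] [Nonempty ι] [LinearOrder β]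
    (f : ι → Ω → β) (b : β) :
    {ω | b < univ.inf' univ_nonempty fun j => f j ω} = ⋂ j, {ω | b < f j ω} := by
  ext ω
  simp

theorem setOf_forall_sup'_lt_eq_iInter {ι κ Ω β : Type*} [Fintype ι] [Nonempty ι]
    [LinearOrder β] (u : ι → κ → β) (P : κ → Ω → β) :
    {ω | ∀ i, (univ.sup' univ_nonempty fun j => u j i) < P i ω}
      = ⋂ j, {ω | ∀ i, u j i < P i ω} := by
  ext ω
  simpa [sup'_lt_iff] using forall_comm

/-- Omnibus (double-adaptation) test: if each statistic `S j` has continuous strictly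
decreasing null survival function `G j` (with inverse `Ginv j`), and each event
`{S j < Ginv j s}` is a cross-boundary event `{∀ i, P i > u j i s}`, then the omnibus
statistic `S_o = min_j G j (S j)` satisfies
`P(S_o > s) = P(∀ i, P i > max_j u j i s)`. -/
theorem stmt_18 {Ω : Type*} [MeasureSpace Ω] {n m : ℕ}
    (P : Fin n → Ω → ℝ)
    (S : Fin (m + 1) → Ω → ℝ)
    (G : Fin (m + 1) → ℝ → ℝ) (hG : ∀ j, StrictAnti (G j))
    (Ginv : Fin (m + 1) → ℝ → ℝ) (hGinv : ∀ j s, G j (Ginv j s) = s)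
    (u : Fin (m + 1) → Fin n → ℝ → ℝ)
    (hcross : ∀ j s, {ω : Ω | S j ω < Ginv j s} = {ω : Ω | ∀ i, u j i s < P i ω})
    (So : Ω → ℝ)
    (hSo : ∀ ω, So ω = Finset.univ.inf' Finset.univ_nonempty fun j => G j (S j ω))
    (s : ℝ) :
    volume {ω : Ω | s < So ω}
      = volume {ω : Ω |
          ∀ i, (Finset.univ.sup' Finset.univ_nonempty fun j => u j i s) < P i ω} := by
  have hmarginal : ∀ j, {ω | s < G j (S j ω)} = {ω | ∀ i, u j i s < P i ω} := fun j => by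
    rw [← hcross j s]
    ext ω
    exact (hG j).lt_apply_iff_of_apply_eq (hGinv j s) _
  obtain rfl : So = fun ω => univ.inf' univ_nonempty fun j => G j (S j ω) := funext hSo
  rw [setOf_lt_inf'_eq_iInter, setOf_forall_sup'_lt_eq_iInter]
  simp only [hmarginal]
end
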